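/- In the symmetric group S₅, the permutations σ₁ = (3 4 5), σ₂ = (2 3 5), σ₃ = (1 5 2), σ₄ = (1 2 5), σ₅ = (2 4 3) each have cycle structure [1,1,3], satisfy σ₁·σ₂·σ₃·σ₄·σ₅ = identity, and the subgroup they generate acts transitively on {1,…,5}. Hence there exists a transitive product-one tuple in S₅ of length 5 with ramification type [[1²,3]⁵]. -/

import Mathlib

/-- Cycle structure of a permutation of `Fin d`, including fixed points as 1-cycles. -/
def fullCycleType {d : ℕ} (σ : Equiv.Perm (Fin d)) : Multiset ℕ :=
  σ.cycleType + Multiset.replicate (d - σ.cycleType.sum) 1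

/-- Product of a list of permutations, composed left-to-right
(apply the first permutation first). -/
def seqProd {d : ℕ} (l : List (Equiv.Perm (Fin d))) : Equiv.Perm (Fin d) :=
  l.foldr (fun σ acc => σ.trans acc) (Equiv.refl (Fin d))


def σ1 : Equiv.Perm (Fin 5) := c[2, 3, 4]

def σ2 : Equiv.Perm (Fin 5) := c[1, 2, 4]

def σ3 : Equiv.Perm (Fin 5) := c[0, 4, 1]

def σ4 : Equiv.Perm (Fin 5) := c[0, 1, 4]

def σ5 : Equiv.Perm (Fin 5) := c[1, 3, 2]

open Equiv Equiv.Perm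

theorem Equiv.Perm.IsThreeCycle.fullCycleType {d : ℕ} {σ : Perm (Fin d)} (h : σ.IsThreeCycle) :
    fullCycleType σ = 3 ::ₘ Multiset.replicate (d - 3) 1 := by
  simp [_root_.fullCycleType, h.cycleType]

theorem fullCycleType_eq_of_card_support_eq_three {σ : Perm (Fin 5)} (h : σ.support.card = 3) :
    fullCycleType σ = {1, 1, 3} := by
  rw [(card_support_eq_three_iff.mp h).fullCycleType]
  decide

theorem Subgroup.exists_mem_apply_eq_of_forall_exists_apply_eq {α : Type*} {H : Subgroup (Perm α)}
    {a : α} (h : ∀ y, ∃ g ∈ H, g a = y) (x y : α) : ∃ g ∈ H, g x = y := by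
  obtain ⟨g, hg, rfl⟩ := h x
  obtain ⟨k, hk, rfl⟩ := h y
  exact ⟨k * g⁻¹, mul_mem hk (inv_mem hg), by simp⟩

theorem exists_mem_closure_apply_eq (x y : Fin 5) :
    ∃ g ∈ Subgroup.closure ({σ1, σ2, σ3, σ4, σ5} : Set (Perm (Fin 5))), g x = y := by
  set H := Subgroup.closure ({σ1, σ2, σ3, σ4, σ5} : Set (Perm (Fin 5)))
  have h1 : σ1 ∈ H := Subgroup.subset_closure (by simp)
  have h4 : σ4 ∈ H := Subgroup.subset_closure (by simp)
  refine Subgroup.exists_mem_apply_eq_of_forall_exists_apply_eq (a := 0) (fun y => ?_) x y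
  -- σ4 = (0 1 4) carries 0 to 1 and 4, and then σ1 = (2 3 4) carries 4 to 2 and 3
  fin_cases y
  · exact ⟨1, one_mem H, rfl⟩
  · exact ⟨σ4, h4, by decide⟩
  · exact ⟨σ1 * σ4 ^ 2, mul_mem h1 (pow_mem h4 2), by decide⟩
  · exact ⟨σ1 ^ 2 * σ4 ^ 2, mul_mem (pow_mem h1 2) (pow_mem h4 2), by decide⟩
  · exact ⟨σ4 ^ 2, pow_mem h4 2, by decide⟩

theorem stmt13 :
    (fullCycleType σ1 = ({1, 1, 3} : Multiset ℕ) ∧ fullCycleType σ2 = ({1, 1, 3} : Multiset ℕ) ∧ fullCycleType σ3 = ({1, 1, 3} : Multiset ℕ) ∧ fullCycleType σ4 = ({1, 1, 3} : Multiset ℕ) ∧ fullCycleType σ5 = ({1, 1, 3} : Multiset ℕ)) ∧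
    seqProd [σ1, σ2, σ3, σ4, σ5] = Equiv.refl (Fin 5) ∧
    (∀ x y : Fin 5, ∃ g ∈ Subgroup.closure ({σ1, σ2, σ3, σ4, σ5} : Set (Equiv.Perm (Fin 5))), g x = y) ∧
    (∃ τ : Fin 5 → Equiv.Perm (Fin 5),
      (∀ i, fullCycleType (τ i) = ({1, 1, 3} : Multiset ℕ)) ∧
      seqProd (List.ofFn τ) = Equiv.refl (Fin 5) ∧
      (∀ x y : Fin 5, ∃ g ∈ Subgroup.closure (Set.range τ), g x = y)) := by
  have hprod : seqProd [σ1, σ2, σ3, σ4, σ5] = Equiv.refl (Fin 5) := by decide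
  have hrange : Set.range ![σ1, σ2, σ3, σ4, σ5] = {σ1, σ2, σ3, σ4, σ5} := by
    ext
    simp only [Matrix.range_cons, Matrix.range_empty, Set.union_empty, Set.mem_union,
      Set.mem_singleton_iff, Set.mem_insert_iff]
  refine ⟨?_, hprod, exists_mem_closure_apply_eq, ![σ1, σ2, σ3, σ4, σ5], ?_, by simpa using hprod,
    hrange ▸ exists_mem_closure_apply_eq⟩
  · exact ⟨fullCycleType_eq_of_card_support_eq_three (by decide),
      fullCycleType_eq_of_card_support_eq_three (by decide),
      fullCycleType_eq_of_card_support_eq_three (by decide),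
      fullCycleType_eq_of_card_support_eq_three (by decide),
      fullCycleType_eq_of_card_support_eq_three (by decide)⟩
  · intro i
    fin_cases i <;> exact fullCycleType_eq_of_card_support_eq_three (by decide)
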